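/- A one-column two-color Clickomania puzzle with groups g_1, …, g_n, where n is even, is solvable if and only if there exists an odd index i (1 ≤ i ≤ n−1) such that the subpuzzle formed by the groups g_1, …, g_i and the subpuzzle formed by the groups g_{i+1}, …, g_n are both solvable. -/

import Mathlib

/-- A move: delete a maximal run of at least two consecutive equal letters.
`w = x ++ c^m ++ y` with `m ≥ 2`, `x` not ending in `c`, `y` not starting in `c`;
the result is `x ++ y`. -/
def ClickMove {α : Type*} (w w' : List α) : Prop :=
  ∃ (x y : List α) (c : α) (m : ℕ),
    2 ≤ m ∧
    x.getLast? ≠ some c ∧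
    y.head? ≠ some c ∧
    w = x ++ List.replicate m c ++ y ∧
    w' = x ++ y

/-- A word is solvable if some finite sequence of moves reduces it to the empty word. -/
def Solvable {α : Type*} (w : List α) : Prop :=
  Relation.ReflTransGen ClickMove w []

/-- The word obtained from a list of groups (letter, size): the concatenation
of the monochromatic runs. -/
def wordOf {α : Type*} (gs : List (α × ℕ)) : List α :=
  (gs.map fun g => List.replicate g.2 g.1).flatten

/-- `gs` is a valid list of groups: every group is nonempty and
consecutive groups have different letters (so the groups are exactly the
maximal runs of `wordOf gs`). -/
def IsGroups {α : Type*} (gs : List (α × ℕ)) : Prop :=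
  (∀ g ∈ gs, 1 ≤ g.2) ∧ List.Chain' (fun a b => a.1 ≠ b.1) gs


open List

variable {α : Type*}

@[simp] lemma wordOf_nil : wordOf ([] : List (α × ℕ)) = [] := rfl

@[simp] lemma wordOf_append (a b : List (α × ℕ)) :
    wordOf (a ++ b) = wordOf a ++ wordOf b := by
  simp [wordOf]

@[simp] lemma wordOf_cons (g : α × ℕ) (gs : List (α × ℕ)) :
    wordOf (g :: gs) = List.replicate g.2 g.1 ++ wordOf gs := rfl

@[simp] lemma wordOf_singleton (g : α × ℕ) :
    wordOf [g] = List.replicate g.2 g.1 := by simp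

lemma head?_replicate_append (c : α) (m : ℕ) (hm : 1 ≤ m) (t : List α) :
    (List.replicate m c ++ t).head? = some c := by
  cases m with
  | zero => omega
  | succ k => simp [List.replicate_succ]

lemma getLast?_append_replicate (c : α) (m : ℕ) (hm : 1 ≤ m) (s : List α) :
    (s ++ List.replicate m c).getLast? = some c := by
  cases m with
  | zero => omega
  | succ k =>
    rw [List.getLast?_append]
    have : (List.replicate (k+1) c).getLast? = some c := by
      rw [show List.replicate (k+1) c = List.replicate k c ++ [c] by
        rw [← List.replicate_succ']]
      exact List.getLast?_concat
    simp [this]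

lemma head?_wordOf_cons (c : α) (m : ℕ) (hm : 1 ≤ m) (q : List (α × ℕ)) :
    (wordOf ((c, m) :: q)).head? = some c := by
  rw [wordOf_cons]; exact head?_replicate_append c m hm _

lemma getLast?_wordOf_concat (c : α) (m : ℕ) (hm : 1 ≤ m) (p : List (α × ℕ)) :
    (wordOf (p ++ [(c, m)])).getLast? = some c := by
  rw [wordOf_append, wordOf_singleton]
  exact getLast?_append_replicate c m hm _


-- IsGroups manipulation
lemma IsGroups.of_append_left {a b : List (α × ℕ)} (h : IsGroups (a ++ b)) :
    IsGroups a := by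
  obtain ⟨h1, h2⟩ := h
  exact ⟨fun g hg => h1 g (by simp [hg]), (List.isChain_append.1 h2).1⟩

lemma IsGroups.of_append_right {a b : List (α × ℕ)} (h : IsGroups (a ++ b)) :
    IsGroups b := by
  obtain ⟨h1, h2⟩ := h
  exact ⟨fun g hg => h1 g (by simp [hg]), (List.isChain_append.1 h2).2.1⟩

lemma IsGroups.take {gs : List (α × ℕ)} (h : IsGroups gs) (i : ℕ) :
    IsGroups (gs.take i) := by
  have h' : IsGroups (gs.take i ++ gs.drop i) := by
    rwa [List.take_append_drop]
  exact h'.of_append_left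

lemma IsGroups.drop {gs : List (α × ℕ)} (h : IsGroups gs) (i : ℕ) :
    IsGroups (gs.drop i) := by
  have h' : IsGroups (gs.take i ++ gs.drop i) := by
    rwa [List.take_append_drop]
  exact h'.of_append_right

-- Solvable basics
lemma solvable_nil : Solvable ([] : List α) := Relation.ReflTransGen.refl

lemma Solvable.head' {w w' : List α} (h : ClickMove w w') (h' : Solvable w') :
    Solvable w := Relation.ReflTransGen.head h h'

lemma solvable_replicate (m : ℕ) (c : α) (h2 : 2 ≤ m) :
    Solvable (List.replicate m c) := by
  refine Solvable.head' ⟨[], [], c, m, h2, by simp, by simp, by simp, by simp⟩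
    solvable_nil

-- ClickMove constructors
lemma clickMove_head (c : α) (m : ℕ) (h2 : 2 ≤ m) (t : List α)
    (ht : t.head? ≠ some c) :
    ClickMove (List.replicate m c ++ t) t :=
  ⟨[], t, c, m, h2, by simp, ht, by simp, by simp⟩

lemma clickMove_last (c : α) (m : ℕ) (h2 : 2 ≤ m) (s : List α)
    (hs : s.getLast? ≠ some c) :
    ClickMove (s ++ List.replicate m c) s :=
  ⟨s, [], c, m, h2, hs, by simp, by simp, by simp⟩

lemma clickMove_mid (c d : α) (m a b : ℕ) (h2 : 2 ≤ m) (hcd : d ≠ c)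
    (ha : 1 ≤ a) (hb : 1 ≤ b) (s t : List α) :
    ClickMove (s ++ List.replicate a d ++ List.replicate m c ++
        List.replicate b d ++ t)
      (s ++ List.replicate (a + b) d ++ t) := by
  refine ⟨s ++ List.replicate a d, List.replicate b d ++ t, c, m, h2, ?_, ?_, by simp, ?_⟩
  · rw [show (List.getLast? (s ++ List.replicate a d)) = some d from ?_]
    · simpa using hcd
    · cases a with
      | zero => omega
      | succ k =>
        rw [List.getLast?_append]
        have : (List.replicate (k+1) d).getLast? = some d := by
          rw [show List.replicate (k+1) d = List.replicate k d ++ [d] by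
            rw [← List.replicate_succ']]
          exact List.getLast?_concat
        simp [this]
  · rw [show ((List.replicate b d ++ t).head?) = some d from ?_]
    · simpa using hcd
    · cases b with
      | zero => omega
      | succ k => simp [List.replicate_succ]
  · rw [List.replicate_add, List.append_assoc, List.append_assoc,
      List.append_assoc]

-- extract a first move from a solution
lemma Solvable.exists_move {w : List α} (h : Solvable w) (hne : w ≠ []) :
    ∃ w', ClickMove w w' ∧ Solvable w' := by
  rcases Relation.ReflTransGen.cases_head h with h | ⟨c, hc, hc'⟩
  · exact absurd h hne
  · exact ⟨c, hc, hc'⟩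

lemma getLast?_replicate' (c : α) (m : ℕ) (hm : 1 ≤ m) :
    (List.replicate m c).getLast? = some c := by
  rcases Nat.exists_eq_succ_of_ne_zero (by omega : m ≠ 0) with ⟨j, rfl⟩
  rw [show List.replicate (j+1) c = List.replicate j c ++ [c] by
    rw [← List.replicate_succ']]
  exact List.getLast?_concat

lemma run_locate :
    ∀ (gs : List (α × ℕ)), IsGroups gs → ∀ (x y : List α) (c : α) (m : ℕ),
      1 ≤ m → wordOf gs = x ++ List.replicate m c ++ y →
      x.getLast? ≠ some c → y.head? ≠ some c →
      ∃ p q, gs = p ++ [(c, m)] ++ q ∧ x = wordOf p ∧ y = wordOf q := by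
  intro gs
  induction gs with
  | nil =>
    intro _ x y c m hm hE _ _
    exfalso
    simp only [wordOf_nil] at hE
    have : List.replicate m c = [] := by
      rcases List.append_eq_nil_iff.1 (List.append_assoc x _ y ▸ hE.symm) with ⟨_, h2⟩
      exact (List.append_eq_nil_iff.1 h2).1
    simp only [List.replicate_eq_nil_iff] at this
    omega
  | cons g rest ih =>
    intro hg x y c m hm hE hx hy
    obtain ⟨d, k⟩ := g
    have hk : 1 ≤ k := hg.1 (d, k) (by simp)
    have hgrest : IsGroups rest :=
      ⟨fun g hgm => hg.1 g (by simp [hgm]), hg.2.tail⟩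
    simp only [wordOf_cons] at hE
    rw [List.append_assoc] at hE
    -- x ++ (replicate m c ++ y) = replicate k d ++ wordOf rest
    rcases List.append_eq_append_iff.1 hE.symm with ⟨c', hc1, hc2⟩ | ⟨a', ha1, ha2⟩
    · -- hc1 : replicate k d = x ++ c', hc2 : replicate m c ++ y = c' ++ wordOf rest
      have hxrep : x = List.replicate x.length d :=
        List.eq_replicate_length.2 fun b hb =>
          List.eq_of_mem_replicate (by rw [hc1]; exact List.mem_append_left _ hb)
      have hcrep : c' = List.replicate c'.length d :=
        List.eq_replicate_length.2 fun b hb =>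
          List.eq_of_mem_replicate (by rw [hc1]; exact List.mem_append_right _ hb)
      rcases eq_or_ne x [] with rfl | hxne
      · -- x = [], c' = replicate k d
        simp only [List.nil_append] at hc1
        have hc1' : c' = List.replicate k d := hc1.symm
        subst hc1'
        have hcd : c = d := by
          have h1 : (List.replicate m c ++ y).head? = some c :=
            head?_replicate_append c m hm y
          rw [hc2, head?_replicate_append d k hk] at h1
          exact (Option.some_inj.1 h1).symm
        subst hcd
        rcases Nat.lt_trichotomy m k with hlt | heq | hgt
        · exfalso
          have hsplit : List.replicate k c =
              List.replicate m c ++ List.replicate (k - m) c := by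
            rw [← List.replicate_add]
            congr 1
            omega
          rw [hsplit, List.append_assoc] at hc2
          have h2 := List.append_cancel_left hc2
          rw [h2, head?_replicate_append c (k - m) (by omega)] at hy
          exact hy rfl
        · subst heq
          have hyw : y = wordOf rest := List.append_cancel_left hc2
          exact ⟨[], rest, by simp, by simp, hyw⟩
        · exfalso
          have hsplit : List.replicate m c =
              List.replicate k c ++ List.replicate (m - k) c := by
            rw [← List.replicate_add]
            congr 1
            omega
          rw [hsplit, List.append_assoc] at hc2
          have hw : List.replicate (m - k) c ++ y = wordOf rest :=
            List.append_cancel_left hc2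
          rcases rest with _ | ⟨⟨e, k₂⟩, r'⟩
          · simp only [wordOf_nil] at hw
            have h0 : List.replicate (m - k) c = [] := (List.append_eq_nil_iff.1 hw).1
            simp only [List.replicate_eq_nil_iff] at h0
            omega
          · have hk₂ : 1 ≤ k₂ := hg.1 (e, k₂) (by simp)
            have hde : c ≠ e := by
              have hch := hg.2
              unfold List.Chain' at hch
              rw [List.isChain_cons_cons] at hch
              exact hch.1
            have h1 : (wordOf ((e, k₂) :: r')).head? = some e := by
              rw [wordOf_cons]
              exact head?_replicate_append e k₂ hk₂ _
            rw [← hw, head?_replicate_append c (m - k) (by omega)] at h1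
            exact hde (Option.some_inj.1 h1)
      · -- x ≠ [] : show c' = [], so x = replicate k d; recurse with x' = []
        have hxl : 1 ≤ x.length := by
          rcases x with _ | _
          · exact absurd rfl hxne
          · simp
        have hdc : d ≠ c := by
          intro h
          apply hx
          rw [hxrep, getLast?_replicate' d x.length hxl, h]
        have hc'nil : c' = [] := by
          by_contra hne
          have hL : 1 ≤ c'.length := by
            rcases c' with _ | _
            · exact absurd rfl hne
            · simp
          have h1 : (List.replicate m c ++ y).head? = some c :=
            head?_replicate_append c m hm y
          rw [hc2, hcrep, head?_replicate_append d c'.length hL] at h1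
          exact hdc (Option.some_inj.1 h1)
        subst hc'nil
        simp only [List.append_nil] at hc1
        simp only [List.nil_append] at hc2
        obtain ⟨p', q', hrest, hxp, hyq⟩ :=
          ih hgrest [] y c m hm (by simpa using hc2.symm) (by simp) hy
        refine ⟨(d, k) :: p', q', by simp [hrest], ?_, hyq⟩
        rw [wordOf_cons, ← hxp, ← hc1]
        simp
    · -- ha1 : x = replicate k d ++ a', ha2 : wordOf rest = a' ++ (replicate m c ++ y)
      have ha' : a'.getLast? ≠ some c := by
        rcases eq_or_ne a' [] with rfl | hne
        · simp
        · obtain ⟨v, hv⟩ := Option.isSome_iff_exists.1 (List.getLast?_isSome.2 hne)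
          rw [hv]
          intro hcon
          apply hx
          rw [ha1, List.getLast?_append, hv, hcon]
          rfl
      obtain ⟨p', q', hrest, hxp, hyq⟩ :=
        ih hgrest a' y c m hm (by rw [ha2, List.append_assoc]) ha' hy
      refine ⟨(d, k) :: p', q', by simp [hrest], ?_, hyq⟩
      rw [ha1, hxp, wordOf_cons]

lemma wordOf_ne_nil {gs : List (α × ℕ)} (hg : IsGroups gs) (hne : gs ≠ []) :
    wordOf gs ≠ [] := by
  rcases gs with _ | ⟨⟨c, k⟩, r⟩
  · exact absurd rfl hne
  · have hk : 1 ≤ k := hg.1 (c, k) (by simp)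
    rcases Nat.exists_eq_succ_of_ne_zero (by omega : k ≠ 0) with ⟨j, rfl⟩
    simp [List.replicate_succ]

lemma extract (gs : List (Bool × ℕ)) (hg : IsGroups gs) (hne : gs ≠ [])
    (hs : Solvable (wordOf gs)) :
    (∃ c m q, gs = (c, m) :: q ∧ 2 ≤ m ∧ Solvable (wordOf q) ∧
      (wordOf q).length + m = (wordOf gs).length) ∨
    (∃ c m p, gs = p ++ [(c, m)] ∧ p ≠ [] ∧ 2 ≤ m ∧ Solvable (wordOf p) ∧
      (wordOf p).length + m = (wordOf gs).length) ∨
    (∃ (p₀ : List (Bool × ℕ)) (d : Bool) (a : ℕ) (c : Bool) (m b : ℕ)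
        (q₀ : List (Bool × ℕ)),
      gs = p₀ ++ [(d, a), (c, m), (d, b)] ++ q₀ ∧ 2 ≤ m ∧
      Solvable (wordOf (p₀ ++ [(d, a + b)] ++ q₀)) ∧
      (wordOf (p₀ ++ [(d, a + b)] ++ q₀)).length + m = (wordOf gs).length) := by
  obtain ⟨w', ⟨x, y, c, m, hm, hx, hy, hw, hw'⟩, hs'⟩ :=
    hs.exists_move (wordOf_ne_nil hg hne)
  obtain ⟨p, q, hgs, hxp, hyq⟩ :=
    run_locate gs hg x y c m (by omega) hw hx hy
  have hlen : (x ++ y).length + m = (wordOf gs).length := by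
    rw [hw]; simp; omega
  rcases eq_or_ne p [] with rfl | hpne
  · left
    refine ⟨c, m, q, by simpa using hgs, hm, ?_, ?_⟩
    · rw [hw', hxp, hyq] at hs'
      simpa using hs'
    · rw [← hyq, ← hlen, hxp]
      simp
  · rcases eq_or_ne q [] with rfl | hqne
    · right; left
      refine ⟨c, m, p, by simpa using hgs, hpne, hm, ?_, ?_⟩
      · rw [hw', hxp, hyq] at hs'
        simpa using hs'
      · rw [← hxp, ← hlen, hyq]
        simp
    · right; right
      obtain ⟨p₀, ⟨d, a⟩, hp⟩ := List.eq_nil_or_concat p |>.resolve_left hpne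
      rw [List.concat_eq_append] at hp
      subst hp
      obtain ⟨⟨e, b⟩, q₀, rfl⟩ := List.exists_cons_of_ne_nil hqne
      have hch := hg.2
      rw [hgs] at hch
      have hch' : List.Chain' (fun a b => (a : Bool × ℕ).1 ≠ b.1)
          (p₀ ++ ((d, a) :: (c, m) :: (e, b) :: q₀)) := by
        simpa using hch
      have hch2 := (List.isChain_append.1 hch').2.1
      have hdc : d ≠ c := (List.isChain_cons_cons.1 hch2).1
      have hce : c ≠ e := (List.isChain_cons_cons.1 (List.isChain_cons_cons.1 hch2).2).1
      have hde : d = e := by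
        cases c <;> cases d <;> cases e <;> simp_all
      subst hde
      refine ⟨p₀, d, a, c, m, b, q₀, by simpa using hgs, hm, ?_, ?_⟩
      · have heq : wordOf (p₀ ++ [(d, a + b)] ++ q₀) = x ++ y := by
          rw [hxp, hyq]
          simp only [wordOf_append, wordOf_cons, wordOf_nil, List.append_nil,
            List.replicate_add, List.append_assoc]
        rwa [heq, ← hw']
      · have heq : wordOf (p₀ ++ [(d, a + b)] ++ q₀) = x ++ y := by
          rw [hxp, hyq]
          simp only [wordOf_append, wordOf_cons, wordOf_nil, List.append_nil,
            List.replicate_add, List.append_assoc]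
        rw [heq]
        exact hlen

-- IsGroups structure lemmas
lemma isGroups_cons_iff (g : α × ℕ) (rest : List (α × ℕ)) :
    IsGroups (g :: rest) ↔
      1 ≤ g.2 ∧ (∀ h ∈ rest.head?, g.1 ≠ h.1) ∧ IsGroups rest := by
  unfold IsGroups
  unfold List.Chain'
  rw [List.isChain_cons]
  constructor
  · rintro ⟨h1, h2, h3⟩
    exact ⟨h1 g (by simp), h2, fun x hx => h1 x (by simp [hx]), h3⟩
  · rintro ⟨h1, h2, h3, h4⟩
    refine ⟨?_, h2, h4⟩
    intro x hx
    rcases List.mem_cons.1 hx with rfl | hx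
    · exact h1
    · exact h3 x hx

lemma isGroups_append_iff (u v : List (α × ℕ)) :
    IsGroups (u ++ v) ↔
      IsGroups u ∧ IsGroups v ∧
        ∀ x ∈ u.getLast?, ∀ y ∈ v.head?, x.1 ≠ y.1 := by
  unfold IsGroups
  unfold List.Chain'
  rw [List.isChain_append]
  constructor
  · rintro ⟨h1, h2, h3, h4⟩
    exact ⟨⟨fun g hg => h1 g (by simp [hg]), h2⟩,
      ⟨fun g hg => h1 g (by simp [hg]), h3⟩, h4⟩
  · rintro ⟨⟨h1, h2⟩, ⟨h3, h4⟩, h5⟩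
    refine ⟨?_, h2, h4, h5⟩
    intro g hg
    rcases List.mem_append.1 hg with h | h
    · exact h1 g h
    · exact h3 g h

-- head/last colors of words
lemma head?_wordOf_ne {c : α} {m : ℕ} {q : List (α × ℕ)}
    (hg : IsGroups ((c, m) :: q)) : (wordOf q).head? ≠ some c := by
  rcases q with _ | ⟨⟨e, b⟩, q₀⟩
  · simp
  · have hb : 1 ≤ b := hg.1 (e, b) (by simp)
    rw [wordOf_cons, head?_replicate_append e b hb]
    have := ((isGroups_cons_iff _ _).1 hg).2.1 (e, b) (by simp)
    simp only [ne_eq, Option.some_inj]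
    intro h
    exact this h.symm

lemma getLast?_wordOf_ne {c : α} {m : ℕ} {p : List (α × ℕ)}
    (hg : IsGroups (p ++ [(c, m)])) : (wordOf p).getLast? ≠ some c := by
  rcases List.eq_nil_or_concat p with rfl | ⟨p₀, ⟨e, b⟩, hp⟩
  · simp
  · rw [List.concat_eq_append] at hp
    subst hp
    have hb : 1 ≤ b := hg.1 (e, b) (by simp)
    rw [wordOf_append, wordOf_cons]
    rw [List.getLast?_append]
    simp only [wordOf_nil, List.append_nil]
    rw [getLast?_replicate' e b hb]
    have := ((isGroups_append_iff _ _).1 hg).2.2 (e, b) (by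
      rw [List.getLast?_append]
      simp) (c, m) (by simp)
    simp only [Option.some_or, ne_eq, Option.some_inj]
    intro h
    exact this h

-- group-level click moves
lemma clickMove_groups_head (c : α) (m : ℕ) (q : List (α × ℕ)) (h2 : 2 ≤ m)
    (hq : (wordOf q).head? ≠ some c) :
    ClickMove (wordOf ((c, m) :: q)) (wordOf q) := by
  rw [wordOf_cons]
  exact clickMove_head c m h2 _ hq

lemma clickMove_groups_last (c : α) (m : ℕ) (p : List (α × ℕ)) (h2 : 2 ≤ m)
    (hp : (wordOf p).getLast? ≠ some c) :
    ClickMove (wordOf (p ++ [(c, m)])) (wordOf p) := by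
  have := clickMove_last c m h2 (wordOf p) hp
  rw [show wordOf (p ++ [(c, m)]) = wordOf p ++ List.replicate m c by simp]
  exact this

lemma clickMove_groups_mid (P Q : List (α × ℕ)) (d : α) (a : ℕ) (c : α)
    (m b : ℕ) (h2 : 2 ≤ m) (hdc : d ≠ c) (ha : 1 ≤ a) (hb : 1 ≤ b) :
    ClickMove (wordOf (P ++ [(d, a), (c, m), (d, b)] ++ Q))
      (wordOf (P ++ [(d, a + b)] ++ Q)) := by
  have h := clickMove_mid c d m a b h2 hdc ha hb (wordOf P) (wordOf Q)
  have e1 : wordOf (P ++ [(d, a), (c, m), (d, b)] ++ Q) =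
      wordOf P ++ List.replicate a d ++ List.replicate m c ++
        List.replicate b d ++ wordOf Q := by
    simp [List.append_assoc]
  have e2 : wordOf (P ++ [(d, a + b)] ++ Q) =
      wordOf P ++ List.replicate (a + b) d ++ wordOf Q := by
    simp [List.append_assoc]
  rw [e1, e2]
  exact h

lemma isGroups_merge {p₀ q₀ : List (α × ℕ)} {d : α} {a : ℕ} {c : α} {m b : ℕ}
    (hg : IsGroups (p₀ ++ [(d, a), (c, m), (d, b)] ++ q₀)) :
    IsGroups (p₀ ++ [(d, a + b)] ++ q₀) := by
  rw [List.append_assoc] at hg ⊢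
  rw [isGroups_append_iff] at hg ⊢
  obtain ⟨hp, hmid, hbd⟩ := hg
  have hmid' : IsGroups ((d, a) :: (c, m) :: (d, b) :: q₀) := by simpa using hmid
  rw [isGroups_cons_iff] at hmid'
  obtain ⟨ha1, _, hmid2⟩ := hmid'
  rw [isGroups_cons_iff] at hmid2
  obtain ⟨_, _, hmid3⟩ := hmid2
  rw [isGroups_cons_iff] at hmid3
  obtain ⟨hb1, hq0head, hq0⟩ := hmid3
  refine ⟨hp, ?_, ?_⟩
  · rw [show ([(d, a + b)] ++ q₀ : List (α × ℕ)) = (d, a + b) :: q₀ by simp,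
      isGroups_cons_iff]
    exact ⟨by simp; omega, hq0head, hq0⟩
  · intro x hx y hy
    have : y = (d, a + b) := by
      simp only [List.singleton_append, List.head?_cons, Option.mem_def,
        Option.some_inj] at hy
      exact hy.symm
    subst this
    exact hbd x hx (d, a) (by simp)

lemma isGroups_bump_first {c : α} {m : ℕ} {q : List (α × ℕ)}
    (hg : IsGroups ((c, m) :: q)) (m' : ℕ) (hm' : 1 ≤ m') :
    IsGroups ((c, m') :: q) := by
  rw [isGroups_cons_iff] at hg ⊢
  exact ⟨hm', hg.2.1, hg.2.2⟩

lemma solvable_bump :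
    ∀ (n : ℕ) (c : Bool) (m : ℕ) (q : List (Bool × ℕ)) (k : ℕ),
      (wordOf ((c, m) :: q)).length ≤ n → IsGroups ((c, m) :: q) →
      Solvable (wordOf ((c, m) :: q)) → Solvable (wordOf ((c, m + k) :: q)) := by
  intro n
  induction n with
  | zero =>
    intro c m q k hlen hg _
    exfalso
    have hm : 1 ≤ m := hg.1 (c, m) (by simp)
    simp only [wordOf_cons, List.length_append, List.length_replicate] at hlen
    omega
  | succ n ih =>
    intro c m q k hlen hg hs
    rcases extract _ hg (by simp) hs with
      ⟨c', m', q', he, hm', hs', hl'⟩ |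
      ⟨c', m', p, he, hpne, hm', hs', hl'⟩ |
      ⟨p₀, d, a, c', m', b, q₀, he, hm', hs', hl'⟩
    · -- head deletion
      simp only [List.cons.injEq, Prod.mk.injEq] at he
      obtain ⟨⟨rfl, rfl⟩, rfl⟩ := he
      exact Solvable.head'
        (clickMove_groups_head c (m + k) q (by omega) (head?_wordOf_ne hg)) hs'
    · -- last deletion
      rcases p with _ | ⟨g, p₀⟩
      · exact absurd rfl hpne
      · simp only [List.cons_append, List.cons.injEq] at he
        obtain ⟨h1, rfl⟩ := he
        subst h1
        have hg1 : IsGroups (((c, m) :: p₀) ++ [(c', m')]) := by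
          rw [show ((c, m) :: p₀) ++ [(c', m')] = (c, m) :: (p₀ ++ [(c', m')])
            by simp]
          exact hg
        have hglast := (isGroups_append_iff _ _).1 hg1
        have hm1 : 1 ≤ m := hg.1 (c, m) (by simp)
        have hsb : Solvable (wordOf ((c, m + k) :: p₀)) := by
          apply ih c m p₀ k ?_ hglast.1 hs'
          simp only [wordOf_cons, List.length_append, List.length_replicate] at hlen hl' ⊢
          omega
        have hgb : IsGroups (((c, m + k) :: p₀) ++ [(c', m')]) := by
          rw [isGroups_append_iff]
          refine ⟨isGroups_bump_first hglast.1 (m + k) (by omega), hglast.2.1, ?_⟩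
          intro x hx y hy
          rcases p₀ with _ | ⟨g₀, p₁⟩
          · simp only [List.getLast?_singleton, Option.mem_def, Option.some_inj] at hx
            have := hglast.2.2 (c, m) (by simp) y hy
            subst hx
            exact this
          · have hx' : x ∈ ((c, m) :: g₀ :: p₁).getLast? := by
              simpa using hx
            exact hglast.2.2 x hx' y hy
        have hw : wordOf ((c, m + k) :: (p₀ ++ [(c', m')])) =
            wordOf (((c, m + k) :: p₀) ++ [(c', m')]) := by simp
        rw [hw]
        exact Solvable.head' (clickMove_groups_last c' m' ((c, m + k) :: p₀) hm'
          (getLast?_wordOf_ne hgb)) hsb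
    · -- merge deletion
      rcases p₀ with _ | ⟨g, p₁⟩
      · -- deleted group is the second group
        simp only [List.nil_append, List.cons.injEq, Prod.mk.injEq] at he
        obtain ⟨⟨rfl, rfl⟩, rfl⟩ := he
        -- now q = (c', m') :: (c, b) :: q₀  (d = c, a = m)
        have hmg : IsGroups ((c, m + b) :: q₀) := by
          have := isGroups_merge (p₀ := []) (by simpa using hg)
          simpa using this
        have hs'' : Solvable (wordOf ((c, m + b) :: q₀)) := by
          simpa using hs'
        have hlb : (wordOf ((c, m + b) :: q₀)).length ≤ n := by
          simp only [wordOf_cons, wordOf_append, wordOf_nil, List.nil_append,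
            List.singleton_append, List.append_nil, List.length_append,
            List.length_replicate, List.length_nil] at hl' hlen ⊢
          omega
        have hsf : Solvable (wordOf ((c, m + b + k) :: q₀)) :=
          ih c (m + b) q₀ k hlb hmg hs''
        -- click on the second group of the bumped list
        have hgq : IsGroups ((c, m) :: (c', m') :: (c, b) :: q₀) := hg
        have hm1 : 1 ≤ m := hg.1 (c, m) (by simp)
        have hcc' : c ≠ c' := by
          have := ((isGroups_cons_iff _ _).1 hgq).2.1 (c', m') (by simp)
          exact this
        have hb1 : 1 ≤ b := hgq.1 (c, b) (by simp)
        have hmov := clickMove_groups_mid ([] : List (Bool × ℕ)) q₀ c (m + k)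
          c' m' b hm' hcc' (by omega) hb1
        simp only [List.nil_append, List.singleton_append] at hmov
        show Solvable (wordOf ((c, m + k) :: (c', m') :: (c, b) :: q₀))
        rw [show ((c, m + k) :: (c', m') :: (c, b) :: q₀ : List (Bool × ℕ)) =
          [(c, m + k), (c', m'), (c, b)] ++ q₀ from by simp]
        refine Solvable.head' hmov ?_
        have heq : m + k + b = m + b + k := by omega
        rw [heq]
        exact hsf
      · -- deleted group is deeper
        simp only [List.cons_append, List.cons.injEq] at he
        obtain ⟨h1, rfl⟩ := he
        subst h1
        have hgm : IsGroups (((c, m) :: p₁) ++ [(d, a + b)] ++ q₀) :=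
          isGroups_merge (p₀ := (c, m) :: p₁) (by
            rw [show ((c, m) :: p₁) ++ [(d, a), (c', m'), (d, b)] ++ q₀ =
              (c, m) :: (p₁ ++ [(d, a), (c', m'), (d, b)] ++ q₀) by simp]
            exact hg)
        have hgm' : IsGroups ((c, m) :: (p₁ ++ [(d, a + b)] ++ q₀)) := by
          rw [show (c, m) :: (p₁ ++ [(d, a + b)] ++ q₀) =
            ((c, m) :: p₁) ++ [(d, a + b)] ++ q₀ by simp]
          exact hgm
        have hs'' : Solvable (wordOf ((c, m) :: (p₁ ++ [(d, a + b)] ++ q₀))) := by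
          rw [show (c, m) :: (p₁ ++ [(d, a + b)] ++ q₀) =
            ((c, m) :: p₁) ++ [(d, a + b)] ++ q₀ by simp]
          exact hs'
        have hlb : (wordOf ((c, m) :: (p₁ ++ [(d, a + b)] ++ q₀))).length ≤ n := by
          simp only [wordOf_cons, wordOf_append, wordOf_nil, List.cons_append,
            List.nil_append, List.singleton_append, List.append_nil,
            List.length_append, List.length_replicate, List.length_nil] at hl' hlen ⊢
          omega
        have hsf := ih c m (p₁ ++ [(d, a + b)] ++ q₀) k hlb hgm' hs''
        -- extract color facts
        have hgmid : IsGroups ((d, a) :: (c', m') :: (d, b) :: q₀) := by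
          have hg2 : IsGroups (((c, m) :: p₁) ++ ([(d, a), (c', m'), (d, b)] ++ q₀)) := by
            rw [show ((c, m) :: p₁) ++ ([(d, a), (c', m'), (d, b)] ++ q₀) =
              (c, m) :: (p₁ ++ [(d, a), (c', m'), (d, b)] ++ q₀) by simp]
            exact hg
          have := ((isGroups_append_iff _ _).1 hg2).2.1
          simpa using this
        have hdc' : d ≠ c' := ((isGroups_cons_iff _ _).1 hgmid).2.1 (c', m') (by simp)
        have ha1 : 1 ≤ a := hgmid.1 (d, a) (by simp)
        have hb1 : 1 ≤ b := hgmid.1 (d, b) (by simp)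
        have hmov := clickMove_groups_mid ((c, m + k) :: p₁) q₀ d a c' m' b
          hm' hdc' ha1 hb1
        rw [show ((c, m + k) :: p₁) ++ [(d, a), (c', m'), (d, b)] ++ q₀ =
          (c, m + k) :: (p₁ ++ [(d, a), (c', m'), (d, b)] ++ q₀) by simp,
          show ((c, m + k) :: p₁) ++ [(d, a + b)] ++ q₀ =
          (c, m + k) :: (p₁ ++ [(d, a + b)] ++ q₀) by simp] at hmov
        exact Solvable.head' hmov hsf


lemma solvable_concat :
    ∀ (n : ℕ) (u v : List (Bool × ℕ)),
      (wordOf u).length + (wordOf v).length ≤ n → IsGroups (u ++ v) →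
      Solvable (wordOf u) → Solvable (wordOf v) →
      Solvable (wordOf (u ++ v)) := by
  intro n
  induction n with
  | zero =>
    intro u v hlen hg hsu hsv
    rcases u with _ | ⟨g, u⟩
    · simpa using hsv
    · rcases v with _ | ⟨g', v⟩
      · simpa using hsu
      ·
        exfalso
        have h1 : 1 ≤ g.2 := hg.1 g (by simp)
        simp only [wordOf_cons, List.length_append, List.length_replicate] at hlen
        omega
  | succ n ih =>
    intro u v hlen hguv hsu hsv
    rcases eq_or_ne u [] with rfl | hune
    · simpa using hsv
    rcases eq_or_ne v [] with rfl | hvne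
    · rw [List.append_nil]; exact hsu
    have hgu : IsGroups u := ((isGroups_append_iff u v).1 hguv).1
    have hgv : IsGroups v := ((isGroups_append_iff u v).1 hguv).2.1
    rcases extract u hgu hune hsu with
      ⟨c, m, q, rfl, hm, hsq, hlq⟩ |
      ⟨c, m, p, rfl, hpne, hm, hsp, hlp⟩ |
      ⟨p₀, d, a, c, m, b, q₀, rfl, hm, hsm, hlm⟩
    · -- u's first group can be deleted: it is the first group of u ++ v
      have hmove : ClickMove (wordOf (((c, m) :: q) ++ v)) (wordOf (q ++ v)) := by
        rw [show ((c, m) :: q) ++ v = (c, m) :: (q ++ v) by simp]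
        exact clickMove_groups_head c m (q ++ v) hm
          (head?_wordOf_ne (by simpa using hguv))
      refine Solvable.head' hmove (ih q v ?_ (by
          have : (c, m) :: (q ++ v) = ((c, m) :: q) ++ v := by simp
          have h2 : IsGroups ((c, m) :: (q ++ v)) := by simpa using hguv
          exact ((isGroups_cons_iff _ _).1 h2).2.2) hsq hsv)
      simp only [wordOf_cons, List.length_append, List.length_replicate] at hlen hlq ⊢
      omega
    · -- u's last group deleted: analyze v
      rcases extract v hgv hvne hsv with
        ⟨c₂, m₂, q₂, rfl, hm₂, hsq₂, hlq₂⟩ |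
        ⟨c₂, m₂, p₂, rfl, hp₂ne, hm₂, hsp₂, hlp₂⟩ |
        ⟨p₂, d, a, c₂, m₂, b, q₂, rfl, hm₂, hsm₂, hlm₂⟩
      · rcases eq_or_ne q₂ [] with rfl | hq₂ne
        · -- v is a single deletable group : delete it as the last group of u ++ v
          have hmove : ClickMove (wordOf ((p ++ [(c, m)]) ++ [(c₂, m₂)]))
              (wordOf (p ++ [(c, m)])) :=
            clickMove_groups_last c₂ m₂ _ hm₂ (getLast?_wordOf_ne (by simpa using hguv))
          exact Solvable.head' hmove hsu
        · -- cross merge: delete v's first group, merging u's last with v's second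
          rcases q₂ with _ | ⟨⟨e, b⟩, q₃⟩
          · exact absurd rfl hq₂ne
          have hshape : (p ++ [(c, m)]) ++ ((c₂, m₂) :: (e, b) :: q₃) =
              p ++ [(c, m), (c₂, m₂), (e, b)] ++ q₃ := by simp
          have hguv' : IsGroups (p ++ [(c, m), (c₂, m₂), (e, b)] ++ q₃) := by
            rw [← hshape]; exact hguv
          -- colors
          have hmid : IsGroups ((c, m) :: (c₂, m₂) :: (e, b) :: q₃) := by
            have := ((isGroups_append_iff p _).1 (by
              rw [show p ++ ((c, m) :: (c₂, m₂) :: (e, b) :: q₃) =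
                p ++ [(c, m), (c₂, m₂), (e, b)] ++ q₃ by simp]
              exact hguv')).2.1
            exact this
          have hcc₂ : c ≠ c₂ := ((isGroups_cons_iff _ _).1 hmid).2.1 (c₂, m₂) (by simp)
          have hc₂e : c₂ ≠ e := by
            have h2 := ((isGroups_cons_iff _ _).1 hmid).2.2
            exact ((isGroups_cons_iff _ _).1 h2).2.1 (e, b) (by simp)
          have hce : c = e := by cases c <;> cases c₂ <;> cases e <;> simp_all
          subst hce
          have hm1 : 1 ≤ m := hmid.1 (c, m) (by simp)
          have hb1 : 1 ≤ b := hmid.1 (c, b) (by simp)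
          -- bump the tail
          have hgq₂ : IsGroups ((c, b) :: q₃) := by
            have h2 := ((isGroups_cons_iff _ _).1 hmid).2.2
            exact ((isGroups_cons_iff _ _).1 h2).2.2
          have hsbump : Solvable (wordOf ((c, b + m) :: q₃)) :=
            solvable_bump _ c b q₃ m le_rfl hgq₂ hsq₂
          have hsbump' : Solvable (wordOf ((c, m + b) :: q₃)) := by
            rw [show m + b = b + m by omega]
            exact hsbump
          -- the merged middle list is valid
          have hgmerge : IsGroups (p ++ [(c, m + b)] ++ q₃) := isGroups_merge hguv'
          -- IH : p ++ ((c, m+b) :: q₃)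
          have hrec : Solvable (wordOf (p ++ ((c, m + b) :: q₃))) := by
            apply ih p ((c, m + b) :: q₃) ?_ (by
              rw [show p ++ ((c, m + b) :: q₃) = p ++ [(c, m + b)] ++ q₃ by simp]
              exact hgmerge) hsp hsbump'
            simp only [wordOf_cons, wordOf_append, List.length_append,
              List.length_replicate] at hlen hlp hlq₂ ⊢
            omega
          have hmove := clickMove_groups_mid p q₃ c m c₂ m₂ b hm₂ hcc₂ hm1 hb1
          rw [hshape]
          refine Solvable.head' hmove ?_
          rw [show p ++ [(c, m + b)] ++ q₃ = p ++ ((c, m + b) :: q₃) by simp]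
          exact hrec
      · -- v's last group deleted : it is the last group of u ++ v
        have hmove : ClickMove (wordOf (((p ++ [(c, m)]) ++ p₂) ++ [(c₂, m₂)]))
            (wordOf ((p ++ [(c, m)]) ++ p₂)) := by
          apply clickMove_groups_last c₂ m₂ _ hm₂
          apply getLast?_wordOf_ne (m := m₂)
          rw [show ((p ++ [(c, m)]) ++ p₂) ++ [(c₂, m₂)] =
            (p ++ [(c, m)]) ++ (p₂ ++ [(c₂, m₂)]) by simp]
          exact hguv
        have hrec : Solvable (wordOf ((p ++ [(c, m)]) ++ p₂)) := by
          apply ih _ _ ?_ ?_ hsu hsp₂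
          · simp only [wordOf_cons, wordOf_append, List.length_append,
              List.length_replicate] at hlen hlp₂ ⊢
            omega
          · have h2 : IsGroups (((p ++ [(c, m)]) ++ p₂) ++ [(c₂, m₂)]) := by
              rw [show ((p ++ [(c, m)]) ++ p₂) ++ [(c₂, m₂)] =
                (p ++ [(c, m)]) ++ (p₂ ++ [(c₂, m₂)]) by simp]
              exact hguv
            exact ((isGroups_append_iff _ _).1 h2).1
        rw [show (p ++ [(c, m)]) ++ (p₂ ++ [(c₂, m₂)]) =
          ((p ++ [(c, m)]) ++ p₂) ++ [(c₂, m₂)] by simp]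
        exact Solvable.head' hmove hrec
      · -- interior deletion in v
        have hshape : (p ++ [(c, m)]) ++ (p₂ ++ [(d, a), (c₂, m₂), (d, b)] ++ q₂) =
            ((p ++ [(c, m)]) ++ p₂) ++ [(d, a), (c₂, m₂), (d, b)] ++ q₂ := by simp
        have hguv' : IsGroups (((p ++ [(c, m)]) ++ p₂) ++ [(d, a), (c₂, m₂), (d, b)] ++ q₂) := by
          rw [← hshape]; exact hguv
        have hgmid : IsGroups ((d, a) :: (c₂, m₂) :: (d, b) :: q₂) := by
          have := ((isGroups_append_iff ((p ++ [(c, m)]) ++ p₂) _).1 (by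
            rw [show ((p ++ [(c, m)]) ++ p₂) ++ ((d, a) :: (c₂, m₂) :: (d, b) :: q₂) =
              ((p ++ [(c, m)]) ++ p₂) ++ [(d, a), (c₂, m₂), (d, b)] ++ q₂ by simp]
            exact hguv')).2.1
          exact this
        have hdc₂ : d ≠ c₂ := ((isGroups_cons_iff _ _).1 hgmid).2.1 (c₂, m₂) (by simp)
        have ha1 : 1 ≤ a := hgmid.1 (d, a) (by simp)
        have hb1 : 1 ≤ b := hgmid.1 (d, b) (by simp)
        have hmove := clickMove_groups_mid ((p ++ [(c, m)]) ++ p₂) q₂ d a c₂ m₂ b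
          hm₂ hdc₂ ha1 hb1
        have hrec : Solvable (wordOf ((p ++ [(c, m)]) ++ (p₂ ++ [(d, a + b)] ++ q₂))) := by
          apply ih _ _ ?_ ?_ hsu hsm₂
          · simp only [wordOf_cons, wordOf_append, wordOf_nil, List.length_append,
              List.length_replicate, List.append_nil, List.length_nil] at hlen hlm₂ ⊢
            omega
          · have := isGroups_merge hguv'
            rw [show ((p ++ [(c, m)]) ++ p₂) ++ [(d, a + b)] ++ q₂ =
              (p ++ [(c, m)]) ++ (p₂ ++ [(d, a + b)] ++ q₂) by simp] at this
            exact this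
        rw [hshape]
        refine Solvable.head' hmove ?_
        rw [show ((p ++ [(c, m)]) ++ p₂) ++ [(d, a + b)] ++ q₂ =
          (p ++ [(c, m)]) ++ (p₂ ++ [(d, a + b)] ++ q₂) by simp]
        exact hrec
    · -- interior deletion in u
      have hshape : (p₀ ++ [(d, a), (c, m), (d, b)] ++ q₀) ++ v =
          p₀ ++ [(d, a), (c, m), (d, b)] ++ (q₀ ++ v) := by simp
      have hguv' : IsGroups (p₀ ++ [(d, a), (c, m), (d, b)] ++ (q₀ ++ v)) := by
        rw [← hshape]; exact hguv
      have hgmid : IsGroups ((d, a) :: (c, m) :: (d, b) :: (q₀ ++ v)) := by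
        have := ((isGroups_append_iff p₀ _).1 (by
          rw [show p₀ ++ ((d, a) :: (c, m) :: (d, b) :: (q₀ ++ v)) =
            p₀ ++ [(d, a), (c, m), (d, b)] ++ (q₀ ++ v) by simp]
          exact hguv')).2.1
        exact this
      have hdc : d ≠ c := ((isGroups_cons_iff _ _).1 hgmid).2.1 (c, m) (by simp)
      have ha1 : 1 ≤ a := hgmid.1 (d, a) (by simp)
      have hb1 : 1 ≤ b := hgmid.1 (d, b) (by simp)
      have hmove := clickMove_groups_mid p₀ (q₀ ++ v) d a c m b hm hdc ha1 hb1
      have hrec : Solvable (wordOf ((p₀ ++ [(d, a + b)] ++ q₀) ++ v)) := by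
        apply ih _ _ ?_ ?_ hsm hsv
        · simp only [wordOf_cons, wordOf_append, wordOf_nil, List.length_append,
            List.length_replicate, List.append_nil, List.length_nil] at hlen hlm ⊢
          omega
        · have := isGroups_merge hguv'
          rw [show p₀ ++ [(d, a + b)] ++ (q₀ ++ v) =
            (p₀ ++ [(d, a + b)] ++ q₀) ++ v by simp] at this
          exact this
      rw [hshape]
      refine Solvable.head' hmove ?_
      rw [show p₀ ++ [(d, a + b)] ++ (q₀ ++ v) =
        (p₀ ++ [(d, a + b)] ++ q₀) ++ v by simp]
      exact hrec


lemma take_PMQ {α : Type*} (P M Q : List α) (t : ℕ) :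
    (P ++ M ++ Q).take (P.length + M.length + t) = P ++ M ++ Q.take t := by
  rw [List.append_assoc, List.take_append,
    List.take_of_length_le (by omega),
    show P.length + M.length + t - P.length = M.length + t by omega,
    List.take_append, List.take_of_length_le (by omega),
    show M.length + t - M.length = t by omega, List.append_assoc]

lemma drop_PMQ {α : Type*} (P M Q : List α) (t : ℕ) :
    (P ++ M ++ Q).drop (P.length + M.length + t) = Q.drop t := by
  rw [List.append_assoc, List.drop_append,
    List.drop_of_length_le (by omega),
    show P.length + M.length + t - P.length = M.length + t by omega,
    List.drop_append, List.drop_of_length_le (by omega),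
    show M.length + t - M.length = t by omega, List.nil_append, List.nil_append]

lemma solvable_single (c : Bool) (m : ℕ) (hm : 2 ≤ m) :
    Solvable (wordOf [(c, m)]) := by
  have : wordOf [(c, m)] = List.replicate m c := by simp
  rw [this]
  exact solvable_replicate m c hm

lemma forward :
    ∀ (n : ℕ) (gs : List (Bool × ℕ)),
      (wordOf gs).length ≤ n → IsGroups gs → Even gs.length →
      Solvable (wordOf gs) → gs ≠ [] →
      ∃ i : ℕ, Odd i ∧ i < gs.length ∧
        Solvable (wordOf (gs.take i)) ∧ Solvable (wordOf (gs.drop i)) := by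
  intro n
  induction n with
  | zero =>
    intro gs hlen hg _ _ hne
    exfalso
    rcases gs with _ | ⟨⟨c, k⟩, r⟩
    · exact hne rfl
    · have : 1 ≤ k := hg.1 (c, k) (by simp)
      simp only [wordOf_cons, List.length_append, List.length_replicate] at hlen
      omega
  | succ n ih =>
    intro gs hlen hg heven hs hne
    rcases extract gs hg hne hs with
      ⟨c, m, q, rfl, hm, hsq, hlq⟩ |
      ⟨c, m, p, rfl, hpne, hm, hsp, hlp⟩ |
      ⟨p₀, d, a, c, m, b, q₀, rfl, hm, hsm, hlm⟩
    · -- first group deleted: split at i = 1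
      refine ⟨1, odd_one, ?_, ?_, ?_⟩
      · simp only [List.length_cons] at heven ⊢
        rw [Nat.even_add_one] at heven
        have : q.length ≠ 0 := by
          intro h0
          rw [h0] at heven
          exact heven Even.zero
        omega
      · simp only [List.take_succ_cons, List.take_zero]
        exact solvable_single c m hm
      · simpa using hsq
    · -- last group deleted: split at i = p.length
      refine ⟨p.length, ?_, ?_, ?_, ?_⟩
      · have : (p ++ [(c, m)]).length = p.length + 1 := by simp
        rw [this, Nat.even_add_one] at heven
        exact Nat.not_even_iff_odd.1 heven
      · simp
      · rw [List.take_append_of_le_length le_rfl, List.take_of_length_le le_rfl]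
        exact hsp
      · rw [List.drop_append_of_le_length le_rfl, List.drop_of_length_le le_rfl,
          List.nil_append]
        exact solvable_single c m hm
    · -- interior deletion: use IH on the merged list
      have hg₂ : IsGroups (p₀ ++ [(d, a + b)] ++ q₀) := isGroups_merge hg
      have hgmid : IsGroups ((d, a) :: (c, m) :: (d, b) :: q₀) := by
        have := ((isGroups_append_iff p₀ _).1 (by
          rw [show p₀ ++ ((d, a) :: (c, m) :: (d, b) :: q₀) =
            p₀ ++ [(d, a), (c, m), (d, b)] ++ q₀ by simp]
          exact hg)).2.1
        exact this
      have hdc : d ≠ c := ((isGroups_cons_iff _ _).1 hgmid).2.1 (c, m) (by simp)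
      have ha1 : 1 ≤ a := hgmid.1 (d, a) (by simp)
      have hb1 : 1 ≤ b := hgmid.1 (d, b) (by simp)
      have hlen₂ : (wordOf (p₀ ++ [(d, a + b)] ++ q₀)).length ≤ n := by
        simp only [wordOf_cons, wordOf_append, wordOf_nil, List.cons_append,
          List.nil_append, List.singleton_append, List.append_nil,
          List.length_append, List.length_replicate, List.length_nil] at hlm hlen ⊢
        omega
      have heven₂ : Even (p₀ ++ [(d, a + b)] ++ q₀).length := by
        simp only [List.length_append, List.length_cons, List.length_nil,
          List.length] at heven ⊢
        rcases heven with ⟨w, hw⟩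
        exact ⟨w - 1, by omega⟩
      obtain ⟨i', hodd, hilt, hst, hsd⟩ :=
        ih _ hlen₂ hg₂ heven₂ hsm (by simp)
      rcases Nat.lt_or_ge i' (p₀.length + 1) with hcase | hcase
      · -- i' ≤ p₀.length : same split works
        have hile : i' ≤ p₀.length := by omega
        refine ⟨i', hodd, ?_, ?_, ?_⟩
        · simp only [List.length_append, List.length_cons, List.length_nil] at hilt ⊢
          omega
        · -- prefixes agree
          have e1 : (p₀ ++ [(d, a), (c, m), (d, b)] ++ q₀).take i' = p₀.take i' := by
            rw [List.append_assoc, List.take_append_of_le_length hile]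
          have e2 : (p₀ ++ [(d, a + b)] ++ q₀).take i' = p₀.take i' := by
            rw [List.append_assoc, List.take_append_of_le_length hile]
          rw [e1, ← e2]
          exact hst
        · -- suffix : one move relates them
          have e1 : (p₀ ++ [(d, a), (c, m), (d, b)] ++ q₀).drop i' =
              p₀.drop i' ++ [(d, a), (c, m), (d, b)] ++ q₀ := by
            rw [List.append_assoc, List.drop_append_of_le_length hile,
              ← List.append_assoc]
          have e2 : (p₀ ++ [(d, a + b)] ++ q₀).drop i' =
              p₀.drop i' ++ [(d, a + b)] ++ q₀ := by
            rw [List.append_assoc, List.drop_append_of_le_length hile,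
              ← List.append_assoc]
          rw [e1]
          refine Solvable.head' (clickMove_groups_mid (p₀.drop i') q₀ d a c m b
            hm hdc ha1 hb1) ?_
          rw [← e2]
          exact hsd
      · -- i' ≥ p₀.length + 1 : split at i' + 2
        set t := i' - (p₀.length + 1) with ht
        have hieq : i' = p₀.length + 1 + t := by omega
        refine ⟨i' + 2, by rcases hodd with ⟨w, hw⟩; exact ⟨w + 1, by omega⟩, ?_, ?_, ?_⟩
        · simp only [List.length_append, List.length_cons, List.length_nil] at hilt ⊢
          omega
        · -- prefix: one move relates them
          have e1 : (p₀ ++ [(d, a), (c, m), (d, b)] ++ q₀).take (i' + 2) =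
              p₀ ++ [(d, a), (c, m), (d, b)] ++ q₀.take t := by
            have := take_PMQ p₀ [(d, a), (c, m), (d, b)] q₀ t
            rw [show p₀.length + ([(d, a), (c, m), (d, b)] : List (Bool × ℕ)).length + t
              = i' + 2 by simp; omega] at this
            exact this
          have e2 : (p₀ ++ [(d, a + b)] ++ q₀).take i' =
              p₀ ++ [(d, a + b)] ++ q₀.take t := by
            have := take_PMQ p₀ [(d, a + b)] q₀ t
            rw [show p₀.length + ([(d, a + b)] : List (Bool × ℕ)).length + t
              = i' by simp; omega] at this
            exact this
          rw [e1]
          refine Solvable.head' (clickMove_groups_mid p₀ (q₀.take t) d a c m b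
            hm hdc ha1 hb1) ?_
          rw [← e2]
          exact hst
        · -- suffixes agree
          have e1 : (p₀ ++ [(d, a), (c, m), (d, b)] ++ q₀).drop (i' + 2) =
              q₀.drop t := by
            have := drop_PMQ p₀ [(d, a), (c, m), (d, b)] q₀ t
            rw [show p₀.length + ([(d, a), (c, m), (d, b)] : List (Bool × ℕ)).length + t
              = i' + 2 by simp; omega] at this
            exact this
          have e2 : (p₀ ++ [(d, a + b)] ++ q₀).drop i' = q₀.drop t := by
            have := drop_PMQ p₀ [(d, a + b)] q₀ t
            rw [show p₀.length + ([(d, a + b)] : List (Bool × ℕ)).length + t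
              = i' by simp; omega] at this
            exact this
          rw [e1, ← e2]
          exact hsd


/-- A one-column two-color Clickomania puzzle with groups `g_1, …, g_n`, `n`
even, is solvable iff there is an odd index `i` (1-indexed, `1 ≤ i ≤ n - 1`)
such that both the prefix subpuzzle `g_1, …, g_i` and the suffix subpuzzle
`g_{i+1}, …, g_n` are solvable. -/
theorem solvable_iff_split_even (gs : List (Bool × ℕ))
    (hg : IsGroups gs) (hne : gs ≠ []) (heven : Even gs.length) :
    Solvable (wordOf gs) ↔
      ∃ i : ℕ, Odd i ∧ i < gs.length ∧
        Solvable (wordOf (gs.take i)) ∧ Solvable (wordOf (gs.drop i)) := by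
  constructor
  · intro hs
    exact forward (wordOf gs).length gs le_rfl hg heven hs hne
  · rintro ⟨i, _, _, hst, hsd⟩
    have hcat := solvable_concat ((wordOf (gs.take i)).length +
      (wordOf (gs.drop i)).length) (gs.take i) (gs.drop i) le_rfl
      (by rw [List.take_append_drop]; exact hg) hst hsd
    rwa [List.take_append_drop] at hcat
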